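/- arXiv:math/0609579 — 6 statements merged into one kernel-verified Lean document; each statement's English description precedes it below -/
import Mathlib

section
/- Let α > 0, μ > 0 and h ∈ (0,1). For y distributed according to the negative binomial pmf f(·; μh, α), the following two identities hold: (i) ∑_{y=0}^∞ f(y; μh, α) · [ y/h − (α+y) μ / (α+μh) ] = 0, and (ii) ∑_{y=0}^∞ f(y; μh, α) · [ y/h^2 − (α+y) μ^2 / (α+μh)^2 ] = μ / ( h (1 + α^{-1} μ h) ). Hence the (β,β) block of the Fisher information equals μ ∇h ∇h' / ( h (1 + α^{-1} μ h) ), with no contribution from the second derivatives of h. -/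
/-!
With `p = m / (α + m)` the negative binomial pmf is `Γ(α + y) / (Γ(α) y!) · p ^ y (1 - p) ^ α`,
whose coefficients are those of the binomial series of `(1 - p) ^ (-α)`; hence it sums to `1`,
and the index shift `y Γ(α + y) / (Γ(α) y!) = α Γ(α + 1 + (y - 1)) / (Γ(α + 1) (y - 1)!)` gives
mean `m`. Both brackets in the theorem are affine in `y`, so their expectations only involve
these two moments.
-/

/-- The negative binomial pmf with mean parameter `m > 0` and shape parameter `α > 0`. -/
noncomputable def negBinom (α m : ℝ) (y : ℕ) : ℝ :=
  Real.Gamma (α + y) * α ^ α * m ^ y /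
    (Real.Gamma α * y.factorial * (α + m) ^ (α + (y : ℝ)))

open Polynomial in
theorem Real.Gamma_add_nat_eq_mul_ascPochhammer {a : ℝ} (ha : 0 < a) (n : ℕ) :
    Real.Gamma (a + n) = Real.Gamma a * (ascPochhammer ℝ n).eval a := by
  induction n with
  | zero => simp
  | succ n ih =>
    rw [Nat.cast_succ, ← add_assoc, Real.Gamma_add_one (by positivity), ih,
      ascPochhammer_succ_right, eval_mul, eval_add, eval_X, eval_natCast]
    ring

theorem Ring.choose_add_nat_sub_one_eq_Gamma {a : ℝ} (ha : 0 < a) (n : ℕ) :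
    Ring.choose (a + n - 1) n = Real.Gamma (a + n) / (Real.Gamma a * n.factorial) := by
  rw [Ring.choose_eq_smul, Polynomial.descPochhammer_smeval_eq_ascPochhammer,
    Polynomial.ascPochhammer_smeval_eq_eval, Real.Gamma_add_nat_eq_mul_ascPochhammer ha,
    smul_eq_mul]
  field_simp [(Real.Gamma_pos_of_pos ha).ne']
  ring_nf

theorem Real.hasSum_Gamma_div_mul_pow {a p : ℝ} (ha : 0 < a) (hp : |p| < 1) :
    HasSum (fun n : ℕ => Real.Gamma (a + n) / (Real.Gamma a * n.factorial) * p ^ n)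
      ((1 - p) ^ (-a)) := by
  have hp' : p ∈ Metric.eball (0 : ℝ) 1 := by
    simpa [edist_dist] using hp
  have := (Real.one_div_one_sub_rpow_hasFPowerSeriesOnBall_zero a).hasSum hp'
  simp only [FormalMultilinearSeries.ofScalars_apply_eq, smul_eq_mul, zero_add] at this
  rw [Real.rpow_neg (by linarith [le_abs_self p]), ← one_div]
  simpa only [Ring.choose_add_nat_sub_one_eq_Gamma ha] using this

theorem Real.natCast_add_one_mul_Gamma_div {a : ℝ} (ha : 0 < a) (n : ℕ) :
    ((n + 1 : ℕ) : ℝ) * (Real.Gamma (a + (n + 1 : ℕ)) / (Real.Gamma a * (n + 1).factorial)) =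
      a * (Real.Gamma (a + 1 + n) / (Real.Gamma (a + 1) * n.factorial)) := by
  rw [Nat.factorial_succ, Real.Gamma_add_one ha.ne', Nat.cast_add_one, add_right_comm]
  field_simp [(Real.Gamma_pos_of_pos ha).ne']
  push_cast
  ring_nf

theorem Real.hasSum_natCast_mul_Gamma_div_mul_pow {a p : ℝ} (ha : 0 < a) (hp : |p| < 1) :
    HasSum (fun n : ℕ => n * (Real.Gamma (a + n) / (Real.Gamma a * n.factorial) * p ^ n))
      (a * p * (1 - p) ^ (-(a + 1))) := by
  have h := (Real.hasSum_Gamma_div_mul_pow (a := a + 1) (by linarith) hp).mul_left (a * p)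
  refine (hasSum_nat_add_iff' 1).mp ?_
  rw [Finset.sum_range_one, Nat.cast_zero, zero_mul, sub_zero]
  refine h.congr_fun fun n => ?_
  rw [← mul_assoc, Real.natCast_add_one_mul_Gamma_div ha, pow_succ]
  ring

section NegBinom

variable {α m : ℝ} (hα : 0 < α) (hm : 0 ≤ m)
include hα hm

theorem negBinom_eq_Gamma_div_mul_pow (y : ℕ) :
    negBinom α m y = Real.Gamma (α + y) / (Real.Gamma α * y.factorial) *
      (m / (α + m)) ^ y * (α / (α + m)) ^ α := by
  have hαm : 0 < α + m := by linarith
  rw [negBinom, div_pow, Real.div_rpow hα.le hαm.le, Real.rpow_add hαm, Real.rpow_natCast]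
  field_simp [(Real.Gamma_pos_of_pos hα).ne']

theorem abs_div_add_lt_one : |m / (α + m)| < 1 := by
  rw [abs_of_nonneg (by positivity), div_lt_one (by linarith)]
  linarith

theorem hasSum_negBinom : HasSum (negBinom α m) 1 := by
  have hαm : 0 < α + m := by linarith
  have hq : 0 < α / (α + m) := by positivity
  have h := (Real.hasSum_Gamma_div_mul_pow hα (abs_div_add_lt_one hα hm)).mul_right
    ((α / (α + m)) ^ α)
  rw [one_sub_div hαm.ne', add_sub_cancel_right, ← Real.rpow_add hq, neg_add_cancel, Real.rpow_zero] at h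
  exact (funext (negBinom_eq_Gamma_div_mul_pow hα hm)).symm ▸ h

theorem hasSum_natCast_mul_negBinom : HasSum (fun y : ℕ => y * negBinom α m y) m := by
  have hαm : 0 < α + m := by linarith
  have hq : 0 < α / (α + m) := by positivity
  have h := (Real.hasSum_natCast_mul_Gamma_div_mul_pow hα (abs_div_add_lt_one hα hm)).mul_right
    ((α / (α + m)) ^ α)
  rw [one_sub_div hαm.ne', add_sub_cancel_right, mul_assoc, ← Real.rpow_add hq, show -(α + 1) + α = -1 by ring,
    Real.rpow_neg_one] at h
  rw [show α * (m / (α + m)) * (α / (α + m))⁻¹ = m by field_simp] at h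
  refine h.congr_fun fun y => ?_
  rw [negBinom_eq_Gamma_div_mul_pow hα hm]
  ring

theorem tsum_negBinom_mul_add (A B : ℝ) :
    ∑' y : ℕ, negBinom α m y * (A * y + B) = A * m + B := by
  have h := ((hasSum_natCast_mul_negBinom hα hm).mul_left A).add
    ((hasSum_negBinom hα hm).mul_left B)
  rw [mul_one] at h
  rw [← h.tsum_eq]
  exact tsum_congr fun y => by ring

end NegBinom

/-- Two identities behind the `(β,β)` block of the Fisher information:
(i) the coefficient of the second derivative of `h` has zero expectation, and
(ii) the coefficient of `∇h∇h'` has expectation `μ / (h(1 + α⁻¹μh))`. -/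
theorem fisher_info_beta_beta (α μ h : ℝ) (hα : 0 < α) (hμ : 0 < μ)
    (hh : h ∈ Set.Ioo (0 : ℝ) 1) :
    (∑' y : ℕ, negBinom α (μ * h) y *
        ((y : ℝ) / h - (α + y) * μ / (α + μ * h)) = 0) ∧
    (∑' y : ℕ, negBinom α (μ * h) y *
        ((y : ℝ) / h ^ 2 - (α + y) * μ ^ 2 / (α + μ * h) ^ 2) =
      μ / (h * (1 + α⁻¹ * μ * h))) := by
  have hh0 : 0 < h := hh.1
  have hm : 0 ≤ μ * h := by positivity
  have hαμh : 0 < α + μ * h := by positivity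
  constructor
  · calc _ = ∑' y : ℕ, negBinom α (μ * h) y *
          ((1 / h - μ / (α + μ * h)) * y + -(α * μ / (α + μ * h))) :=
          tsum_congr fun y => by field_simp; ring
      _ = 0 := by rw [tsum_negBinom_mul_add hα hm]; field_simp; ring
  · calc _ = ∑' y : ℕ, negBinom α (μ * h) y *
          ((1 / h ^ 2 - μ ^ 2 / (α + μ * h) ^ 2) * y + -(α * μ ^ 2 / (α + μ * h) ^ 2)) :=
          tsum_congr fun y => by field_simp; ring
      _ = μ / (h * (1 + α⁻¹ * μ * h)) := by
          rw [tsum_negBinom_mul_add hα hm]; field_simp; ring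
end

section
/- Let α > 0 and m > 0 and let y be distributed according to the negative binomial pmf f(·; m, α). Then ∑_{y=0}^∞ f(y; m, α) · ψ(α+y) = ψ(α) + log( (α+m)/α ), where ψ is the digamma function. Equivalently, the score with respect to α has zero expectation. -/
/-- The digamma function `ψ = (log Γ)'`. -/
noncomputable def digamma (x : ℝ) : ℝ :=
  deriv (fun t : ℝ => Real.log (Real.Gamma t)) x

/-!
Write `p = m / (α + m)`. Then `f(y; m, α) = (1 - p)^α c_y(α) p^y` with
`c_y(β) = Γ(β + y) / (Γ(β) y!)`, the coefficients of the binomial series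
`∑ c_y(β) p^y = (1 - p)^(-β)`. Since `∂_β c_y(β) = c_y(β) (ψ(β + y) - ψ(β))`, differentiating this
series in the exponent `β` gives `∑ c_y(α) (ψ(α + y) - ψ(α)) p^y = -log (1 - p) (1 - p)^(-α)`,
which is the claim. Termwise differentiation is justified by
`0 ≤ ψ(β + y) - ψ(β) = ∑_{i<y} 1/(β + i) ≤ y/β` and `A c_y(A + 1) = (A + y) c_y(A)`.
-/

open Real Set
open scoped Nat

noncomputable def negBinomCoeff (β : ℝ) (n : ℕ) : ℝ := Gamma (β + n) / (Gamma β * n !)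

lemma Gamma_add_nat_div_Gamma {β : ℝ} (hβ : 0 < β) (n : ℕ) :
    Gamma (β + n) / Gamma β = (ascPochhammer ℝ n).eval β := by
  induction n with
  | zero => simp [(Gamma_pos_of_pos hβ).ne']
  | succ n ih =>
    rw [ascPochhammer_succ_eval, ← ih, Nat.cast_succ, ← add_assoc,
      Gamma_add_one (by positivity)]
    ring

lemma negBinomCoeff_eq_ascPochhammer {β : ℝ} (hβ : 0 < β) (n : ℕ) :
    negBinomCoeff β n = (ascPochhammer ℝ n).eval β / n ! := by
  rw [negBinomCoeff, ← div_div, Gamma_add_nat_div_Gamma hβ]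

lemma negBinomCoeff_eq_choose {β : ℝ} (hβ : 0 < β) (n : ℕ) :
    negBinomCoeff β n = Ring.choose (β + n - 1) n := by
  rw [← Ring.multichoose_eq, negBinomCoeff_eq_ascPochhammer hβ,
    ← Polynomial.ascPochhammer_smeval_eq_eval, ← Ring.factorial_nsmul_multichoose_eq_ascPochhammer,
    nsmul_eq_mul]
  field_simp

lemma hasSum_negBinomCoeff_mul_pow {β x : ℝ} (hβ : 0 < β) (hx : |x| < 1) :
    HasSum (fun n => negBinomCoeff β n * x ^ n) ((1 - x) ^ (-β)) := by
  have := (one_div_one_sub_rpow_hasFPowerSeriesOnBall_zero β).hasSum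
    (y := x) (by simpa [enorm_eq_nnnorm, ← NNReal.coe_lt_one] using hx)
  rw [rpow_neg (by linarith [le_abs_self x])]
  simpa [negBinomCoeff_eq_choose hβ, FormalMultilinearSeries.ofScalars_apply_eq, mul_comm]
    using this

lemma hasDerivAt_Gamma_of_pos {x : ℝ} (hx : 0 < x) :
    HasDerivAt Gamma (Gamma x * digamma x) x := by
  have hΓ : DifferentiableAt ℝ Gamma x :=
    differentiableAt_Gamma fun n => by linarith [(n.cast_nonneg : (0 : ℝ) ≤ n)]
  have hlog := hΓ.hasDerivAt.log (Gamma_pos_of_pos hx).ne'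
  rw [digamma, hlog.deriv, mul_div_cancel₀ _ (Gamma_pos_of_pos hx).ne']
  exact hΓ.hasDerivAt

lemma digamma_add_one {x : ℝ} (hx : 0 < x) : digamma (x + 1) = digamma x + x⁻¹ := by
  have hlhs := (hasDerivAt_Gamma_of_pos (by positivity : 0 < x + 1)).comp_add_const x 1
  have hrhs := (hasDerivAt_id x).mul (hasDerivAt_Gamma_of_pos hx)
  have heq : (fun t => Gamma (t + 1)) =ᶠ[nhds x] fun t => id t * Gamma t := by
    filter_upwards [Ioi_mem_nhds hx] with t ht using Gamma_add_one ht.ne'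
  have := (hrhs.congr_of_eventuallyEq heq).unique hlhs
  rw [Gamma_add_one hx.ne', id] at this
  have hG := (Gamma_pos_of_pos hx).ne'
  field_simp at this ⊢
  linear_combination -this

lemma digamma_add_nat {x : ℝ} (hx : 0 < x) (n : ℕ) :
    digamma (x + n) = digamma x + ∑ i ∈ Finset.range n, (x + i)⁻¹ := by
  induction n with
  | zero => simp
  | succ n ih =>
    rw [Nat.cast_succ, ← add_assoc, digamma_add_one (by positivity), ih, Finset.sum_range_succ]
    ring

lemma digamma_add_nat_sub_nonneg {x : ℝ} (hx : 0 < x) (n : ℕ) :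
    0 ≤ digamma (x + n) - digamma x := by
  rw [digamma_add_nat hx, add_sub_cancel_left]
  positivity

lemma digamma_add_nat_sub_le {x : ℝ} (hx : 0 < x) (n : ℕ) :
    digamma (x + n) - digamma x ≤ n / x := by
  rw [digamma_add_nat hx, add_sub_cancel_left, div_eq_mul_inv]
  simpa using Finset.sum_le_card_nsmul (Finset.range n) _ x⁻¹ fun i _ =>
    inv_anti₀ hx (le_add_of_nonneg_right i.cast_nonneg)

lemma hasDerivAt_negBinomCoeff {β : ℝ} (hβ : 0 < β) (n : ℕ) :
    HasDerivAt (negBinomCoeff · n) (negBinomCoeff β n * (digamma (β + n) - digamma β)) β := by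
  have hnum := (hasDerivAt_Gamma_of_pos (by positivity : 0 < β + n)).comp_add_const β n
  have hden := (hasDerivAt_Gamma_of_pos hβ).mul_const (n ! : ℝ)
  have hΓ := Gamma_pos_of_pos hβ
  refine (hnum.div hden (by positivity)).congr_deriv ?_
  rw [negBinomCoeff]
  field_simp

lemma negBinomCoeff_nonneg {β : ℝ} (hβ : 0 < β) (n : ℕ) : 0 ≤ negBinomCoeff β n := by
  have := Gamma_pos_of_pos hβ
  have := Gamma_pos_of_pos (by positivity : 0 < β + n)
  unfold negBinomCoeff
  positivity

lemma negBinomCoeff_mono {β A : ℝ} (hβ : 0 < β) (hβA : β ≤ A) (n : ℕ) :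
    negBinomCoeff β n ≤ negBinomCoeff A n := by
  rw [negBinomCoeff_eq_ascPochhammer hβ, negBinomCoeff_eq_ascPochhammer (hβ.trans_le hβA)]
  gcongr
  induction n with
  | zero => simp
  | succ n ih =>
    simp only [ascPochhammer_succ_eval]
    gcongr
    exact (ascPochhammer_pos n A (hβ.trans_le hβA)).le

lemma mul_negBinomCoeff_add_one {A : ℝ} (hA : 0 < A) (n : ℕ) :
    A * negBinomCoeff (A + 1) n = (A + n) * negBinomCoeff A n := by
  have := Gamma_pos_of_pos hA
  rw [negBinomCoeff, negBinomCoeff, add_right_comm, Gamma_add_one (by positivity),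
    Gamma_add_one hA.ne']
  field_simp

lemma negBinomCoeff_mul_digamma_sub_le {a β A : ℝ} (ha : 0 < a) (haβ : a ≤ β) (hβA : β ≤ A)
    (n : ℕ) :
    negBinomCoeff β n * (digamma (β + n) - digamma β) ≤ A / a * negBinomCoeff (A + 1) n := by
  have hβ := ha.trans_le haβ
  have hA := hβ.trans_le hβA
  calc negBinomCoeff β n * (digamma (β + n) - digamma β)
      ≤ negBinomCoeff A n * ((A + n) / a) := by
        refine mul_le_mul (negBinomCoeff_mono hβ hβA n) ?_ (digamma_add_nat_sub_nonneg hβ n)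
          (negBinomCoeff_nonneg hA n)
        calc _ ≤ n / β := digamma_add_nat_sub_le hβ n
          _ ≤ (A + n) / a := by gcongr; linarith
    _ = A / a * negBinomCoeff (A + 1) n := by
        rw [mul_div_assoc', mul_comm, ← mul_negBinomCoeff_add_one hA]
        ring

theorem hasSum_negBinomCoeff_mul_digamma_sub_mul_pow {β x : ℝ} (hβ : 0 < β) (hx : |x| < 1) :
    HasSum (fun n => negBinomCoeff β n * (digamma (β + n) - digamma β) * x ^ n)
      (-log (1 - x) * (1 - x) ^ (-β)) := by
  have h1x : 0 < 1 - x := by linarith [le_abs_self x]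
  set u : ℕ → ℝ := fun n => 2 * β / (β / 2) * (negBinomCoeff (2 * β + 1) n * |x| ^ n)
  have hu : Summable u :=
    ((hasSum_negBinomCoeff_mul_pow (by positivity) (by rwa [abs_abs])).summable).mul_left _
  have hderiv : ∀ n, ∀ b ∈ Ioo (β / 2) (2 * β), HasDerivAt (fun b => negBinomCoeff b n * x ^ n)
      (negBinomCoeff b n * (digamma (b + n) - digamma b) * x ^ n) b := fun n b hb =>
    (hasDerivAt_negBinomCoeff (by linarith [hb.1]) n).mul_const _
  have hbound : ∀ n, ∀ b ∈ Ioo (β / 2) (2 * β),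
      ‖negBinomCoeff b n * (digamma (b + n) - digamma b) * x ^ n‖ ≤ u n := fun n b hb => by
    have hb0 : 0 < b := by linarith [hb.1]
    rw [norm_mul, norm_pow, Real.norm_eq_abs, Real.norm_eq_abs, abs_of_nonneg
      (mul_nonneg (negBinomCoeff_nonneg hb0 n) (digamma_add_nat_sub_nonneg hb0 n))]
    simp only [u, ← mul_assoc]
    exact mul_le_mul_of_nonneg_right
      (negBinomCoeff_mul_digamma_sub_le (by positivity) hb.1.le hb.2.le n) (by positivity)
  have hβmem : β ∈ Ioo (β / 2) (2 * β) := ⟨by linarith, by linarith⟩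
  have hseries := hasDerivAt_tsum_of_isPreconnected hu isOpen_Ioo isPreconnected_Ioo hderiv
    hbound hβmem (hasSum_negBinomCoeff_mul_pow hβ hx).summable hβmem
  have hclosed : HasDerivAt (fun b => (1 - x) ^ (-b)) (log (1 - x) * (-1) * (1 - x) ^ (-β)) β :=
    (hasDerivAt_neg β).const_rpow h1x
  have heq : (fun b => ∑' n, negBinomCoeff b n * x ^ n) =ᶠ[nhds β] fun b => (1 - x) ^ (-b) := by
    filter_upwards [Ioi_mem_nhds hβ] with b hb using (hasSum_negBinomCoeff_mul_pow hb hx).tsum_eq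
  have hsum : Summable fun n => negBinomCoeff β n * (digamma (β + n) - digamma β) * x ^ n :=
    .of_norm_bounded hu fun n => hbound n β hβmem
  convert hsum.hasSum using 1
  rw [(hseries.congr_of_eventuallyEq heq.symm).unique hclosed]
  ring

lemma negBinom_eq_mul_negBinomCoeff {α m : ℝ} (hα : 0 < α) (hm : 0 < m) (y : ℕ) :
    negBinom α m y = (α / (α + m)) ^ α * (negBinomCoeff α y * (m / (α + m)) ^ y) := by
  have := Gamma_pos_of_pos hα
  rw [negBinom, negBinomCoeff, rpow_add (by positivity), rpow_natCast,
    div_rpow hα.le (by positivity), div_pow]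
  field_simp

/-- For `y` negative binomial, `E ψ(α + y) = ψ(α) + log((α+m)/α)`; equivalently, the
score with respect to `α` has zero expectation. -/
theorem negBinom_expectation_digamma (α m : ℝ) (hα : 0 < α) (hm : 0 < m) :
    ∑' y : ℕ, negBinom α m y * digamma (α + y) =
      digamma α + Real.log ((α + m) / α) := by
  set p := m / (α + m)
  set q := α / (α + m)
  have hp : |p| < 1 := by
    rw [abs_of_pos (by positivity), div_lt_one (by positivity)]
    linarith
  have hq : 1 - p = q := by
    simp only [p, q]
    field_simp
    ring
  have hqq : q ^ α * q ^ (-α) = 1 := by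
    rw [rpow_neg (by positivity), mul_inv_cancel₀ (by positivity)]
  have hmean := hasSum_negBinomCoeff_mul_pow hα hp
  have hscore := hasSum_negBinomCoeff_mul_digamma_sub_mul_pow hα hp
  rw [hq] at hmean hscore
  convert ((hmean.mul_left (q ^ α * digamma α)).add (hscore.mul_left (q ^ α))).tsum_eq using 1
  · exact tsum_congr fun y => by rw [negBinom_eq_mul_negBinomCoeff hα hm]; ring
  · rw [show log ((α + m) / α) = -log q by rw [← log_inv, inv_div]]
    linear_combination (log q - digamma α) * hqq
end

section
/- Let v_1, ..., v_r be vectors in ℝ^d and h_1, ..., h_r be positive reals, and suppose A = ∑_{i=1}^r v_i v_i' / h_i is positive definite (hence invertible). Then ∑_{i=1}^r h_i − (∑_{i=1}^r v_i)' A^{-1} (∑_{i=1}^r v_i) ≥ 0. -/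
/-!
Put `u = A⁻¹ w` with `w = ∑ vᵢ` and `aᵢ = vᵢ ⬝ᵥ u`. Then `w ⬝ᵥ u = ∑ aᵢ` and
`u ⬝ᵥ A u = ∑ aᵢ² / hᵢ`, while `A u = w` makes both equal to the quadratic form `Q`
in question. Summing `2 aᵢ - aᵢ² / hᵢ ≤ hᵢ`, i.e. `(hᵢ - aᵢ)² / hᵢ ≥ 0`, gives
`2 Q - Q ≤ ∑ hᵢ`.
-/

open Matrix

namespace Matrix

variable {ι n R : Type*} [Fintype ι] [Fintype n] [CommRing R]

theorem dotProduct_vecMulVec_self_mulVec (x u : n → R) :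
    u ⬝ᵥ (vecMulVec x x *ᵥ u) = (x ⬝ᵥ u) ^ 2 := by
  rw [vecMulVec_mulVec, op_smul_eq_smul, dotProduct_smul, smul_eq_mul, dotProduct_comm, sq]

theorem dotProduct_sum_smul_vecMulVec_mulVec (c : ι → R) (v : ι → n → R) (u : n → R) :
    u ⬝ᵥ ((∑ i, c i • vecMulVec (v i) (v i)) *ᵥ u) = ∑ i, c i * (v i ⬝ᵥ u) ^ 2 := by
  simp only [sum_mulVec, dotProduct_sum, smul_mulVec, dotProduct_smul, smul_eq_mul,
    dotProduct_vecMulVec_self_mulVec]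

end Matrix

theorem two_mul_sub_inv_mul_sq_le {a h : ℝ} (hh : 0 < h) : 2 * a - h⁻¹ * a ^ 2 ≤ h := by
  have hsq : 0 ≤ h⁻¹ * (h - a) ^ 2 := by positivity
  have hexpand : h⁻¹ * (h - a) ^ 2 = h - 2 * a + h⁻¹ * a ^ 2 := by field_simp; ring
  linarith

theorem two_mul_dotProduct_sub_quadForm_le {ι n : Type*} [Fintype ι] [Fintype n]
    (v : ι → n → ℝ) (h : ι → ℝ) (hh : ∀ i, 0 < h i) (u : n → ℝ) :
    2 * ((∑ i, v i) ⬝ᵥ u) - u ⬝ᵥ ((∑ i, (h i)⁻¹ • vecMulVec (v i) (v i)) *ᵥ u) ≤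
      ∑ i, h i := by
  rw [dotProduct_sum_smul_vecMulVec_mulVec, sum_dotProduct, Finset.mul_sum,
    ← Finset.sum_sub_distrib]
  exact Finset.sum_le_sum fun i _ => two_mul_sub_inv_mul_sq_le (hh i)

/-- If `A = ∑ vᵢvᵢ'/hᵢ` is positive definite, then
`∑ hᵢ − (∑ vᵢ)' A⁻¹ (∑ vᵢ) ≥ 0`. -/
theorem sum_h_sub_quadform_nonneg {d r : ℕ} (v : Fin r → Fin d → ℝ) (h : Fin r → ℝ)
    (hh : ∀ i, 0 < h i)
    (hA : (∑ i, (h i)⁻¹ • vecMulVec (v i) (v i)).PosDef) :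
    0 ≤ ∑ i, h i -
      (∑ i, v i) ⬝ᵥ ((∑ i, (h i)⁻¹ • vecMulVec (v i) (v i))⁻¹ *ᵥ ∑ i, v i) := by
  set A := ∑ i, (h i)⁻¹ • vecMulVec (v i) (v i)
  set w := ∑ i, v i
  have hAu : A *ᵥ (A⁻¹ *ᵥ w) = w := by
    rw [mulVec_mulVec, mul_nonsing_inv A ((isUnit_iff_isUnit_det A).mp hA.isUnit), one_mulVec]
  have hbound := two_mul_dotProduct_sub_quadForm_le v h hh (A⁻¹ *ᵥ w)
  rw [hAu, dotProduct_comm (A⁻¹ *ᵥ w)] at hbound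
  linarith
end

section
/- Let A be a d×d symmetric positive definite real matrix, w ∈ ℝ^d and s > 0 with A − w w'/s positive definite and s − w' A^{-1} w > 0. For μ > 0 let V(μ) be the inverse of the block matrix [[μA, w],[w', s/μ]]. Then for every j ∈ {1,...,d} the diagonal entry (V(μ))_{jj} is a nonincreasing function of μ on (0,∞), and the entry (V(μ))_{d+1,d+1} is a nondecreasing function of μ on (0,∞). That is, a larger μ leads to more precise estimation of β and less precise estimation of μ. -/
/-!
With `N = [[A, w], [w', s]]`, the block matrix `[[μA, w], [w', s/μ]]` equals
`diag(μ, 1) * N * diag(1, μ⁻¹)`, so its inverse is `diag(1, μ) * N⁻¹ * diag(μ⁻¹, 1)`: the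
`β`-diagonal entries of `V(μ)` are those of `N⁻¹` times `μ⁻¹`, and the `μ`-entry is that of
`N⁻¹` times `μ`. Since `A` is positive definite with nonnegative Schur complement
`s - w' A⁻¹ w`, `N` and hence `N⁻¹` are positive semidefinite, so these diagonal entries of
`N⁻¹` are nonnegative.
-/

open Matrix

namespace Matrix

section Scaling

variable {m n K : Type*} [Fintype m] [Fintype n] [DecidableEq m] [DecidableEq n] [Field K]

theorem inv_diagonal_sumElim_const {a b : K} (ha : a ≠ 0) (hb : b ≠ 0) :
    (diagonal (Sum.elim (fun _ : m => a) (fun _ : n => b)))⁻¹ =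
      diagonal (Sum.elim (fun _ => a⁻¹) (fun _ => b⁻¹)) := by
  apply inv_eq_left_inv
  ext (i | i) (j | j) <;> simp [diagonal_apply, one_apply, ha, hb]

theorem fromBlocks_smul_smul_inv_eq_diagonal_mul_mul_diagonal (A : Matrix m m K)
    (B : Matrix m n K) (C : Matrix n m K) (D : Matrix n n K) {c : K} (hc : c ≠ 0) :
    fromBlocks (c • A) B C (c⁻¹ • D) =
      diagonal (Sum.elim (fun _ => c) (fun _ => 1)) * fromBlocks A B C D *
        diagonal (Sum.elim (fun _ => 1) (fun _ => c⁻¹)) := by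
  ext (i | i) (j | j) <;> simp [mul_diagonal, diagonal_mul] <;> field_simp

theorem inv_fromBlocks_smul_smul_inv (A : Matrix m m K)
    (B : Matrix m n K) (C : Matrix n m K) (D : Matrix n n K) {c : K} (hc : c ≠ 0) :
    (fromBlocks (c • A) B C (c⁻¹ • D))⁻¹ =
      diagonal (Sum.elim (fun _ => 1) (fun _ => c)) * (fromBlocks A B C D)⁻¹ *
        diagonal (Sum.elim (fun _ => c⁻¹) (fun _ => 1)) := by
  rw [fromBlocks_smul_smul_inv_eq_diagonal_mul_mul_diagonal A B C D hc, mul_inv_rev, mul_inv_rev,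
    inv_diagonal_sumElim_const one_ne_zero (inv_ne_zero hc),
    inv_diagonal_sumElim_const hc one_ne_zero, inv_inv, inv_one, mul_assoc]

theorem inv_fromBlocks_smul_smul_inv_apply_inl_inl (A : Matrix m m K)
    (B : Matrix m n K) (C : Matrix n m K) (D : Matrix n n K) {c : K} (hc : c ≠ 0) (i j : m) :
    (fromBlocks (c • A) B C (c⁻¹ • D))⁻¹ (.inl i) (.inl j) =
      c⁻¹ * (fromBlocks A B C D)⁻¹ (.inl i) (.inl j) := by
  simp [inv_fromBlocks_smul_smul_inv A B C D hc, mul_diagonal, diagonal_mul, mul_comm]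

theorem inv_fromBlocks_smul_smul_inv_apply_inr_inr (A : Matrix m m K)
    (B : Matrix m n K) (C : Matrix n m K) (D : Matrix n n K) {c : K} (hc : c ≠ 0) (i j : n) :
    (fromBlocks (c • A) B C (c⁻¹ • D))⁻¹ (.inr i) (.inr j) =
      c * (fromBlocks A B C D)⁻¹ (.inr i) (.inr j) := by
  simp [inv_fromBlocks_smul_smul_inv A B C D hc, mul_diagonal, diagonal_mul]

end Scaling

theorem PosDef.posSemidef_fromBlocks_replicateCol {m R : Type*} [Fintype m] [DecidableEq m]
    [Field R] [PartialOrder R] [StarRing R] [StarOrderedRing R] {A : Matrix m m R}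
    (hA : A.PosDef) (w : m → R) {s : R} (hs : 0 ≤ s - star w ⬝ᵥ A⁻¹ *ᵥ w) :
    (fromBlocks A (replicateCol Unit w) (replicateCol Unit w)ᴴ (of fun _ _ => s)).PosSemidef := by
  have := hA.isUnit.invertible
  rw [PosDef.fromBlocks₁₁ _ _ hA, conjTranspose_replicateCol, Matrix.mul_assoc,
    ← replicateCol_mulVec, replicateRow_mul_replicateCol]
  have hschur : (of fun _ _ => s) - of (fun (_ _ : Unit) => star w ⬝ᵥ A⁻¹ *ᵥ w) =
      diagonal fun _ => s - star w ⬝ᵥ A⁻¹ *ᵥ w := by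
    ext
    simp
  rw [hschur]
  exact PosSemidef.diagonal fun _ => hs

end Matrix

theorem fisher_info_inverse_monotone_general {d : ℕ} (A : Matrix (Fin d) (Fin d) ℝ)
    (w : Fin d → ℝ) (s : ℝ) (hA : A.PosDef)
    (h2 : 0 < s - w ⬝ᵥ A⁻¹ *ᵥ w) :
    (∀ j : Fin d, AntitoneOn (fun μ : ℝ =>
        (fromBlocks (μ • A) (Matrix.of fun i (_ : Unit) => w i)
            (Matrix.of fun (_ : Unit) j' => w j') (Matrix.of fun _ _ => s / μ))⁻¹
          (Sum.inl j) (Sum.inl j)) (Set.Ioi 0)) ∧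
    MonotoneOn (fun μ : ℝ =>
        (fromBlocks (μ • A) (Matrix.of fun i (_ : Unit) => w i)
            (Matrix.of fun (_ : Unit) j' => w j') (Matrix.of fun _ _ => s / μ))⁻¹
          (Sum.inr ()) (Sum.inr ())) (Set.Ioi 0) := by
  set N := fromBlocks A (replicateCol Unit w) (replicateCol Unit w)ᴴ (of fun _ _ => s)
  have hN : N.PosSemidef := hA.posSemidef_fromBlocks_replicateCol w (by simpa using h2.le)
  have hNinv_diag (i) : 0 ≤ N⁻¹ i i := hN.inv.diag_nonneg
  have hscale (μ : ℝ) : (of fun (_ _ : Unit) => s / μ) = μ⁻¹ • of fun _ _ => s := by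
    ext
    simp [div_eq_inv_mul]
  constructor
  · intro j a (ha : 0 < a) b (hb : 0 < b) hab
    simp only [hscale]
    rw [inv_fromBlocks_smul_smul_inv_apply_inl_inl _ _ _ _ ha.ne',
      inv_fromBlocks_smul_smul_inv_apply_inl_inl _ _ _ _ hb.ne']
    exact mul_le_mul_of_nonneg_right (inv_anti₀ ha hab) (hNinv_diag _)
  · intro a (ha : 0 < a) b (hb : 0 < b) hab
    simp only [hscale]
    rw [inv_fromBlocks_smul_smul_inv_apply_inr_inr _ _ _ _ ha.ne',
      inv_fromBlocks_smul_smul_inv_apply_inr_inr _ _ _ _ hb.ne']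
    exact mul_le_mul_of_nonneg_right hab (hNinv_diag _)

/-- The diagonal entries of `V(μ) = [[μA, w],[w', s/μ]]⁻¹` corresponding to `β` are
nonincreasing in `μ` on `(0,∞)`, while the entry corresponding to `μ` is nondecreasing:
a larger `μ` gives more precise estimation of `β` and less precise estimation of `μ`. -/
theorem fisher_info_inverse_monotone {d : ℕ} (A : Matrix (Fin d) (Fin d) ℝ)
    (w : Fin d → ℝ) (s : ℝ) (hA : A.PosDef) (hs : 0 < s)
    (h1 : (A - s⁻¹ • vecMulVec w w).PosDef)
    (h2 : 0 < s - w ⬝ᵥ A⁻¹ *ᵥ w) :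
    (∀ j : Fin d, AntitoneOn (fun μ : ℝ =>
        (fromBlocks (μ • A) (Matrix.of fun i (_ : Unit) => w i)
            (Matrix.of fun (_ : Unit) j' => w j') (Matrix.of fun _ _ => s / μ))⁻¹
          (Sum.inl j) (Sum.inl j)) (Set.Ioi 0)) ∧
    MonotoneOn (fun μ : ℝ =>
        (fromBlocks (μ • A) (Matrix.of fun i (_ : Unit) => w i)
            (Matrix.of fun (_ : Unit) j' => w j') (Matrix.of fun _ _ => s / μ))⁻¹
          (Sum.inr ()) (Sum.inr ())) (Set.Ioi 0) :=
  fisher_info_inverse_monotone_general A w s hA h2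
end

section
/- Let v_1, ..., v_r be vectors in ℝ^d and h_1, ..., h_r be reals with 0 < h_i < 1 for all i, and let μ > 0. Then the Fisher information with known sizes dominates the β-information with unknown Poisson sizes in the Loewner order: μ ∑_{i=1}^r v_i v_i' / ( h_i (1−h_i) ) − μ [ ∑_{i=1}^r v_i v_i' / h_i − (∑_{i=1}^r v_i)(∑_{i=1}^r v_i)' / (∑_{i=1}^r h_i) ] is positive semidefinite. Hence knowing the sizes n_i never decreases the asymptotic precision of β (the efficiency loss ratio ρ is at most 1). -/
open Matrix

/-! Since `1 / (h (1 - h)) - 1 / h = 1 / (1 - h)`, the difference of the two informations is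
`μ [∑ vᵢ vᵢ' / (1 - hᵢ) + (∑ vᵢ)(∑ vᵢ)' / ∑ hᵢ]`, a nonnegative combination of rank-one
matrices `a a'`, each of which is positive semidefinite. -/

lemma inv_mul_one_sub_sub_inv {K : Type*} [Field K] {x : K} (hx : x ≠ 0) (hx₁ : 1 - x ≠ 0) :
    (x * (1 - x))⁻¹ - x⁻¹ = (1 - x)⁻¹ := by
  field_simp
  ring

lemma smul_sum_sub_smul_sub_eq {ι n K : Type*} [Fintype ι] [Field K] (v : ι → n → K)
    (h : ι → K) (hh : ∀ i, h i ≠ 0 ∧ 1 - h i ≠ 0) (μ : K) :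
    μ • (∑ i, (h i * (1 - h i))⁻¹ • vecMulVec (v i) (v i)) -
      μ • ((∑ i, (h i)⁻¹ • vecMulVec (v i) (v i)) -
        (∑ i, h i)⁻¹ • vecMulVec (∑ i, v i) (∑ i, v i)) =
      μ • ((∑ i, (1 - h i)⁻¹ • vecMulVec (v i) (v i)) +
        (∑ i, h i)⁻¹ • vecMulVec (∑ i, v i) (∑ i, v i)) := by
  rw [← smul_sub, sub_sub_eq_add_sub, add_sub_right_comm, ← Finset.sum_sub_distrib]
  congr 3 with i : 1
  rw [← sub_smul, inv_mul_one_sub_sub_inv (hh i).1 (hh i).2]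

lemma posSemidef_smul_vecMulVec_self {n : Type*} [Finite n] (a : n → ℝ) {c : ℝ} (hc : 0 ≤ c) :
    (c • vecMulVec a a).PosSemidef := by
  simpa using (posSemidef_vecMulVec_self_star a).smul hc

/-- The Fisher information for `β` with known sizes dominates the profiled `β`-information
with unknown Poisson sizes in the Loewner order, so the efficiency ratio `ρ` is at most 1. -/
theorem known_sizes_info_dominates {d r : ℕ} (v : Fin r → Fin d → ℝ) (h : Fin r → ℝ)
    (hh : ∀ i, h i ∈ Set.Ioo (0 : ℝ) 1) (μ : ℝ) (hμ : 0 < μ) :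
    (μ • (∑ i, (h i * (1 - h i))⁻¹ • vecMulVec (v i) (v i)) -
      μ • ((∑ i, (h i)⁻¹ • vecMulVec (v i) (v i)) -
        (∑ i, h i)⁻¹ • vecMulVec (∑ i, v i) (∑ i, v i))).PosSemidef := by
  have one_sub_pos i : 0 < 1 - h i := sub_pos.2 (hh i).2
  rw [smul_sum_sub_smul_sub_eq v h fun i => ⟨(hh i).1.ne', (one_sub_pos i).ne'⟩]
  have sum_nonneg : 0 ≤ ∑ i, h i := Finset.sum_nonneg fun i _ => (hh i).1.le
  refine .smul (.add (posSemidef_sum _ fun i _ => ?_) ?_) hμ.le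
  · exact posSemidef_smul_vecMulVec_self _ (inv_nonneg.2 (one_sub_pos i).le)
  · exact posSemidef_smul_vecMulVec_self _ (inv_nonneg.2 sum_nonneg)
end

section
/- Let α > 0, μ > 0, h ∈ (0,1] and k ∈ ℕ. Then the marginal pmf of the three-stage hierarchy (λ Gamma with shape α and rate α/μ; n given λ Poisson with mean λ; y given n binomial with size n and success probability h) is the negative binomial pmf with mean μh and shape α: ∫_0^∞ [ ∑_{n=k}^∞ (n choose k) h^k (1−h)^{n−k} · e^{−λ} λ^n / n! ] · Γ(α)^{-1} (α/μ)^α λ^{α−1} e^{−(α/μ)λ} dλ = Γ(α+k)·α^α·(μh)^k / (Γ(α)·k!·(α+μh)^{α+k}). -/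
open MeasureTheory Real Set

lemma exp_tsum_div (x : ℝ) : ∑' n : ℕ, x ^ n / n.factorial = Real.exp x := by
  rw [Real.exp_eq_exp_ℝ, NormedSpace.exp_eq_tsum_div]

lemma mySumLemma (h : ℝ) (k : ℕ) (l : ℝ) :
    ∑' n : ℕ, (n.choose k : ℝ) * h ^ k * (1 - h) ^ (n - k) *
        (Real.exp (-l) * l ^ n / n.factorial) =
    h ^ k * l ^ k / k.factorial * Real.exp (-(h * l)) := by
  set f : ℕ → ℝ := fun n => (n.choose k : ℝ) * h ^ k * (1 - h) ^ (n - k) *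
      (Real.exp (-l) * l ^ n / n.factorial) with hf
  have hinj : Function.Injective (fun m : ℕ => m + k) := add_left_injective k
  have hsupp : Function.support f ⊆ Set.range (fun m : ℕ => m + k) := by
    intro n hn
    by_contra hc
    have hnk : n < k := by
      rcases lt_or_ge n k with h' | h'
      · exact h'
      · exact absurd ⟨n - k, by show n - k + k = n; omega⟩ hc
    apply hn
    simp [hf, Nat.choose_eq_zero_of_lt hnk]
  rw [← hinj.tsum_eq hsupp]
  have hterm : ∀ m : ℕ, f (m + k) =
      (h ^ k * l ^ k / k.factorial * Real.exp (-l)) * (((1 - h) * l) ^ m / m.factorial) := by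
    intro m
    have hk : k ≤ m + k := Nat.le_add_left k m
    have hc : ((m + k).choose k : ℝ) = (m + k).factorial / (k.factorial * ((m + k) - k).factorial) :=
      Nat.cast_choose ℝ hk
    simp only [hf, hc, Nat.add_sub_cancel, mul_pow]
    have h1 : (m.factorial : ℝ) ≠ 0 := Nat.cast_ne_zero.mpr m.factorial_ne_zero
    have h2 : (k.factorial : ℝ) ≠ 0 := Nat.cast_ne_zero.mpr k.factorial_ne_zero
    have h3 : ((m + k).factorial : ℝ) ≠ 0 := Nat.cast_ne_zero.mpr (m + k).factorial_ne_zero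
    field_simp
    ring
  calc ∑' m : ℕ, f (m + k)
      = ∑' m : ℕ, (h ^ k * l ^ k / k.factorial * Real.exp (-l)) * (((1 - h) * l) ^ m / m.factorial) := by
        exact tsum_congr hterm
    _ = (h ^ k * l ^ k / k.factorial * Real.exp (-l)) * Real.exp ((1 - h) * l) := by
        rw [tsum_mul_left, exp_tsum_div]
    _ = h ^ k * l ^ k / k.factorial * Real.exp (-(h * l)) := by
        rw [mul_assoc, ← Real.exp_add]; ring_nf

/-- The marginal pmf of the three-stage hierarchy (`λ` Gamma with shape `α` and rate `α/μ`;
`n | λ` Poisson with mean `λ`; `y | n` binomial with size `n` and success probability `h`)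
is the negative binomial pmf with mean `μh` and shape `α`. -/
theorem three_stage_hierarchy_negBinom (α μ h : ℝ) (hα : 0 < α) (hμ : 0 < μ)
    (hh0 : 0 < h) (hh1 : h ≤ 1) (k : ℕ) :
    ∫ l in Set.Ioi (0 : ℝ),
      (∑' n : ℕ, (n.choose k : ℝ) * h ^ k * (1 - h) ^ (n - k) *
          (Real.exp (-l) * l ^ n / n.factorial)) *
        ((Real.Gamma α)⁻¹ * (α / μ) ^ α * l ^ (α - 1) * Real.exp (-(α / μ) * l)) =
    Real.Gamma (α + k) * α ^ α * (μ * h) ^ k /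
      (Real.Gamma α * k.factorial * (α + μ * h) ^ (α + (k : ℝ))) := by
  have hr : 0 < h + α / μ := by positivity
  have hak : 0 < α + (k : ℝ) := by positivity
  set C : ℝ := h ^ k / k.factorial * ((Real.Gamma α)⁻¹ * (α / μ) ^ α) with hC
  have hcong : ∀ l ∈ Set.Ioi (0 : ℝ),
      (∑' n : ℕ, (n.choose k : ℝ) * h ^ k * (1 - h) ^ (n - k) *
          (Real.exp (-l) * l ^ n / n.factorial)) *
        ((Real.Gamma α)⁻¹ * (α / μ) ^ α * l ^ (α - 1) * Real.exp (-(α / μ) * l)) =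
      C * (l ^ (α + (k : ℝ) - 1) * Real.exp (-((h + α / μ) * l))) := by
    intro l hl
    have hl0 : 0 < l := hl
    rw [mySumLemma]
    have hpow : l ^ (α + (k : ℝ) - 1) = l ^ (α - 1) * l ^ k := by
      rw [← Real.rpow_natCast l k, ← Real.rpow_add hl0]
      ring_nf
    have hexp : Real.exp (-((h + α / μ) * l)) = Real.exp (-(h * l)) * Real.exp (-(α / μ) * l) := by
      rw [← Real.exp_add]; ring_nf
    rw [hpow, hexp, hC]
    ring
  rw [setIntegral_congr_fun measurableSet_Ioi hcong, integral_const_mul,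
    Real.integral_rpow_mul_exp_neg_mul_Ioi hak hr]
  -- now algebra
  have hμ0 : (0:ℝ) < μ := hμ
  have hΓ : 0 < Real.Gamma α := Real.Gamma_pos_of_pos hα
  have hkf : (0:ℝ) < k.factorial := Nat.cast_pos.mpr k.factorial_pos
  have hs : 0 < α + μ * h := by positivity
  have h1 : h + α / μ = (α + μ * h) / μ := by field_simp; ring
  have h2 : (1 / ((α + μ * h) / μ)) ^ (α + (k:ℝ)) = μ ^ (α + (k:ℝ)) / (α + μ * h) ^ (α + (k:ℝ)) := by
    rw [one_div, Real.inv_rpow (by positivity), Real.div_rpow hs.le hμ0.le, inv_div]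
  have e1 : (α / μ) ^ α = α ^ α / μ ^ α := Real.div_rpow hα.le hμ0.le α
  have e2 : μ ^ (α + (k:ℝ)) = μ ^ α * μ ^ k := by
    rw [Real.rpow_add hμ0, Real.rpow_natCast]
  rw [h1, h2, hC, e1, e2]
  have hμα : (0:ℝ) < μ ^ α := Real.rpow_pos_of_pos hμ0 α
  have hsα : (0:ℝ) < (α + μ * h) ^ (α + (k:ℝ)) := Real.rpow_pos_of_pos hs _
  field_simp
  ring
end
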